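/- arXiv:1012.1949 — 5 statements merged into one kernel-verified Lean document; each statement's English description precedes it below -/
import Mathlib

section
/- Let S and T be join-semilattices with zero with T finite, let φ : S → T be an ideal-induced zero-preserving join-homomorphism, and let X ⊆ S be finite. Then there exists a finite sub-join-semilattice-with-zero S' of S such that X ⊆ S' and the restriction φ↾S' : S' → T is ideal-induced. -/
theorem stmt5 {S T : Type*} [SemilatticeSup S] [OrderBot S] [SemilatticeSup T] [OrderBot T]
    [Finite T] (φ : SupBotHom S T)
    (hsurj : Function.Surjective φ)
    (hii : ∀ x y : S, φ x = φ y → ∃ z : S, x ⊔ z = y ⊔ z ∧ φ z = ⊥)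
    (X : Set S) (hX : X.Finite) :
    ∃ S' : Set S, S'.Finite ∧ ⊥ ∈ S' ∧ (∀ a ∈ S', ∀ b ∈ S', a ⊔ b ∈ S') ∧ X ⊆ S' ∧
      (∀ t : T, ∃ s ∈ S', φ s = t) ∧
      ∀ a ∈ S', ∀ b ∈ S', φ a = φ b → ∃ z ∈ S', a ⊔ z = b ⊔ z ∧ φ z = ⊥ := by
  classical
  -- section of φ
  obtain ⟨σ, hσ⟩ := hsurj.hasRightInverse
  -- generator witnesses: for each a, z a with a ⊔ z a = σ (φ a) ⊔ z a and φ (z a) = ⊥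
  have hz : ∀ a : S, ∃ z : S, a ⊔ z = σ (φ a) ⊔ z ∧ φ z = ⊥ := fun a =>
    hii a (σ (φ a)) (by rw [hσ (φ a)])
  choose z hz1 hz2 using hz
  -- pair witnesses
  have hw : ∀ u v : S, ∃ w : S, (φ u = φ v → u ⊔ w = v ⊔ w) ∧ φ w = ⊥ := by
    intro u v
    by_cases h : φ u = φ v
    · obtain ⟨w, hw1, hw2⟩ := hii u v h
      exact ⟨w, fun _ => hw1, hw2⟩
    · exact ⟨⊥, fun h' => absurd h' h, map_bot φ⟩
  choose w hw1 hw2 using hw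
  -- finite sup-closed set of "canonical" elements
  set C : Set S := supClosure (Set.range σ ∪ {⊥}) with hC
  have hCfin : C.Finite := ((Set.finite_range σ).union (Set.finite_singleton _)).supClosure
  have hCclosed : SupClosed C := supClosed_supClosure
  -- generators
  set G : Set S := X ∪ {⊥} ∪ Set.range σ with hG
  have hGfin : G.Finite := (hX.union (Set.finite_singleton _)).union (Set.finite_range σ)
  -- the big witness Z
  set F : Finset S :=
    hGfin.toFinset.image z ∪ (hCfin.toFinset ×ˢ hCfin.toFinset).image (fun p => w p.1 p.2)
    with hF
  set Z : S := F.sup id with hZdef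
  have hφZ : φ Z = ⊥ := by
    rw [hZdef, map_finset_sup]
    rw [Finset.sup_eq_bot_iff]
    intro s hs
    simp only [hF, Finset.mem_union, Finset.mem_image, Finset.mem_product] at hs
    rcases hs with ⟨a, _, rfl⟩ | ⟨p, _, rfl⟩
    · exact hz2 a
    · exact hw2 p.1 p.2
  have hzZ : ∀ a ∈ G, z a ≤ Z := by
    intro a ha
    exact Finset.le_sup (f := id)
      (Finset.mem_union_left _ (Finset.mem_image_of_mem z (hGfin.mem_toFinset.2 ha)))
  have hwZ : ∀ u ∈ C, ∀ v ∈ C, w u v ≤ Z := by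
    intro u hu v hv
    refine Finset.le_sup (f := id) (Finset.mem_union_right _ ?_)
    exact Finset.mem_image_of_mem _
      (Finset.mem_product (p := (u, v)).2 ⟨hCfin.mem_toFinset.2 hu, hCfin.mem_toFinset.2 hv⟩)
  -- the subsemilattice
  refine ⟨supClosure (G ∪ {Z}), (hGfin.union (Set.finite_singleton Z)).supClosure,
    subset_supClosure (Set.mem_union_left _ (Set.mem_union_left _ (Set.mem_union_right _ rfl))),
    fun a ha b hb => supClosed_supClosure ha hb,
    fun x hx => subset_supClosure (Set.mem_union_left _ (Set.mem_union_left _ (Set.mem_union_left _ hx))),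
    fun t => ⟨σ t, subset_supClosure (Set.mem_union_left _ (Set.mem_union_right _ ⟨t, rfl⟩)),
      hσ t⟩, ?_⟩
  -- key claim: every element of S' is "canonicalized" by joining with Z
  have key : ∀ a ∈ supClosure (G ∪ {Z}), ∃ u ∈ C, φ u = φ a ∧ a ⊔ Z = u ⊔ Z := by
    have : supClosure (G ∪ {Z}) ⊆ {a | ∃ u ∈ C, φ u = φ a ∧ a ⊔ Z = u ⊔ Z} := by
      refine supClosure_min ?_ ?_
      · rintro a (ha | rfl)
        · refine ⟨σ (φ a), subset_supClosure (Set.mem_union_left _ ⟨φ a, rfl⟩), hσ (φ a), ?_⟩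
          have h1 : z a ≤ Z := hzZ a ha
          calc a ⊔ Z = a ⊔ z a ⊔ Z := by rw [sup_assoc, sup_eq_right.2 h1]
            _ = σ (φ a) ⊔ z a ⊔ Z := by rw [hz1 a]
            _ = σ (φ a) ⊔ Z := by rw [sup_assoc, sup_eq_right.2 h1]
        · refine ⟨⊥, subset_supClosure (Set.mem_union_right _ rfl), ?_, by simp⟩
          rw [map_bot, hφZ]
      · rintro x ⟨u, hu, hφu, hxu⟩ y ⟨v, hv, hφv, hyv⟩
        refine ⟨u ⊔ v, hCclosed hu hv, by rw [map_sup, map_sup, hφu, hφv], ?_⟩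
        calc x ⊔ y ⊔ Z = (x ⊔ Z) ⊔ (y ⊔ Z) := by
              rw [sup_sup_sup_comm, sup_idem]
          _ = (u ⊔ Z) ⊔ (v ⊔ Z) := by rw [hxu, hyv]
          _ = u ⊔ v ⊔ Z := by rw [sup_sup_sup_comm, sup_idem]
    exact fun a ha => this ha
  intro a ha b hb hab
  obtain ⟨u, hu, hφu, hau⟩ := key a ha
  obtain ⟨v, hv, hφv, hbv⟩ := key b hb
  have huv : φ u = φ v := by rw [hφu, hφv, hab]
  have hZmem : Z ∈ supClosure (G ∪ {Z}) :=
    subset_supClosure (Set.mem_union_right _ rfl)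
  refine ⟨Z, hZmem, ?_, hφZ⟩
  have hwle : w u v ≤ Z := hwZ u hu v hv
  have h3 : u ⊔ Z = v ⊔ Z := by
    calc u ⊔ Z = u ⊔ w u v ⊔ Z := by rw [sup_assoc, sup_eq_right.2 hwle]
      _ = v ⊔ w u v ⊔ Z := by rw [hw1 u v huv]
      _ = v ⊔ Z := by rw [sup_assoc, sup_eq_right.2 hwle]
  rw [hau, h3, ← hbv]
end

section
/- Let A be an algebra, let n ≥ 2 be an integer. Then A is congruence n-permutable if and only if for all x₀, x₁, …, x_n ∈ A, there exist y₀ = x₀, y₁, …, y_n = x_n in A such that Θ_A(y_k, y_{k+1}) ⊆ ⋁{Θ_A(x_i, x_{i+1}) : i < n even} for all odd k < n, and Θ_A(y_k, y_{k+1}) ⊆ ⋁{Θ_A(x_i, x_{i+1}) : i < n odd} for all even k < n. -/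
/-- A similarity type: a set of operation symbols with arities. -/
structure Signature where
  ops : Type
  arity : ops → ℕ

/-- An algebra structure of similarity type `σ` on the set `A`. -/
structure AlgOn (σ : Signature) (A : Type*) where
  interp : ∀ o : σ.ops, (Fin (σ.arity o) → A) → A

/-- A congruence of the algebra `(A, F)`: an equivalence relation compatible
with all the operations. -/
def IsCon {σ : Signature} {A : Type*} (F : AlgOn σ A) (r : A → A → Prop) : Prop :=
  Equivalence r ∧ ∀ (o : σ.ops) (x y : Fin (σ.arity o) → A),
    (∀ i, r (x i) (y i)) → r (F.interp o x) (F.interp o y)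

/-- The congruence generated by a binary relation `s`: the intersection of all
congruences containing `s`. -/
def cgGen {σ : Signature} {A : Type*} (F : AlgOn σ A) (s : A → A → Prop) : A → A → Prop :=
  fun a b => ∀ r : A → A → Prop, IsCon F r → (∀ u v : A, s u v → r u v) → r a b

/-- The `n`-fold alternating relational composition `α ∘ β ∘ α ∘ …` (`n` factors,
starting with `α`): there is a chain of length `n` whose steps alternate between
`α` and `β`, starting with `α`. -/
def AltComp {A : Type*} (α β : A → A → Prop) (n : ℕ) (a b : A) : Prop :=
  ∃ c : ℕ → A, c 0 = a ∧ c n = b ∧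
    ∀ i < n, (i % 2 = 0 → α (c i) (c (i + 1))) ∧ (i % 2 = 1 → β (c i) (c (i + 1)))

/-- An algebra is congruence `n`-permutable when the two `n`-fold alternating
compositions of any two congruences agree. -/
def CongNPerm {σ : Signature} {A : Type*} (F : AlgOn σ A) (n : ℕ) : Prop :=
  ∀ α β : A → A → Prop, IsCon F α → IsCon F β →
    ∀ a b : A, AltComp α β n a b ↔ AltComp β α n a b


section Aux
variable {σ : Signature} {A : Type*} (F : AlgOn σ A)

lemma cgGen_isCon (s : A → A → Prop) : IsCon F (cgGen F s) := by
  refine ⟨⟨?_, ?_, ?_⟩, ?_⟩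
  · intro a r hr _; exact hr.1.refl a
  · intro a b h r hr hs; exact hr.1.symm (h r hr hs)
  · intro a b c h1 h2 r hr hs; exact hr.1.trans (h1 r hr hs) (h2 r hr hs)
  · intro o x y h r hr hs
    exact hr.2 o x y (fun i => h i r hr hs)

lemma cgGen_self (s : A → A → Prop) {u v : A} (h : s u v) : cgGen F s u v :=
  fun _ _ hs => hs u v h

end Aux

theorem stmt6 {σ : Signature} {A : Type*} (F : AlgOn σ A) (n : ℕ) (hn : 2 ≤ n) :
    CongNPerm F n ↔
      ∀ x : ℕ → A, ∃ y : ℕ → A, y 0 = x 0 ∧ y n = x n ∧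
        (∀ k < n, k % 2 = 1 →
          cgGen F (fun u v => u = y k ∧ v = y (k + 1)) ≤
            cgGen F (fun u v => ∃ i < n, i % 2 = 0 ∧ u = x i ∧ v = x (i + 1))) ∧
        (∀ k < n, k % 2 = 0 →
          cgGen F (fun u v => u = y k ∧ v = y (k + 1)) ≤
            cgGen F (fun u v => ∃ i < n, i % 2 = 1 ∧ u = x i ∧ v = x (i + 1))) := by
  constructor
  · intro hP x
    set α := cgGen F (fun u v => ∃ i < n, i % 2 = 0 ∧ u = x i ∧ v = x (i + 1)) with hαdef
    set β := cgGen F (fun u v => ∃ i < n, i % 2 = 1 ∧ u = x i ∧ v = x (i + 1)) with hβdef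
    have hα := cgGen_isCon F (fun u v => ∃ i < n, i % 2 = 0 ∧ u = x i ∧ v = x (i + 1))
    have hβ := cgGen_isCon F (fun u v => ∃ i < n, i % 2 = 1 ∧ u = x i ∧ v = x (i + 1))
    have h1 : AltComp α β n (x 0) (x n) :=
      ⟨x, rfl, rfl, fun i hi =>
        ⟨fun he => cgGen_self F _ ⟨i, hi, he, rfl, rfl⟩,
         fun ho => cgGen_self F _ ⟨i, hi, ho, rfl, rfl⟩⟩⟩
    obtain ⟨c, hc0, hcn, hstep⟩ := (hP α β hα hβ (x 0) (x n)).1 h1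
    refine ⟨c, hc0, hcn, ?_, ?_⟩
    · intro k hk hodd a b hab
      exact hab α hα (fun u v huv => huv.1 ▸ huv.2 ▸ (hstep k hk).2 hodd)
    · intro k hk heven a b hab
      exact hab β hβ (fun u v huv => huv.1 ▸ huv.2 ▸ (hstep k hk).1 heven)
  · intro hcond
    suffices key : ∀ α β : A → A → Prop, IsCon F α → IsCon F β →
        ∀ a b : A, AltComp α β n a b → AltComp β α n a b by
      intro α β hα hβ a b
      exact ⟨key α β hα hβ a b, key β α hβ hα a b⟩
    rintro α β hα hβ a b ⟨c, hc0, hcn, hstep⟩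
    obtain ⟨y, hy0, hyn, hodd, heven⟩ := hcond c
    refine ⟨y, hy0.trans hc0, hyn.trans hcn, fun k hk => ⟨?_, ?_⟩⟩
    · intro he
      have h := heven k hk he (y k) (y (k + 1)) (cgGen_self F _ ⟨rfl, rfl⟩)
      exact h β hβ (fun u v huv => by
        obtain ⟨i, hi, hio, hu, hv⟩ := huv
        exact hu ▸ hv ▸ (hstep i hi).2 hio)
    · intro ho
      have h := hodd k hk ho (y k) (y (k + 1)) (cgGen_self F _ ⟨rfl, rfl⟩)
      exact h α hα (fun u v huv => by
        obtain ⟨i, hi, hie, hu, hv⟩ := huv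
        exact hu ▸ hv ▸ (hstep i hi).1 hie)
end

section
/- Let B be an algebra, m a positive integer, x, y ∈ B, and x⃗, y⃗ m-tuples of B. Then Θ_B(x,y) ≤ ⋁_{i<m} Θ_B(x_i, y_i) in Con B if and only if there exist a positive integer n, a tuple z⃗ of elements of B, and terms t₀, …, t_n such that x = t₀(x⃗, y⃗, z⃗), y = t_n(x⃗, y⃗, z⃗), and t_j(y⃗, x⃗, z⃗) = t_{j+1}(x⃗, y⃗, z⃗) for all j < n. -/
/-- Terms of similarity type `σ` with variables in `V`. -/
inductive Term (σ : Signature) (V : Type*) : Type _ where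
  | var : V → Term σ V
  | op : (o : σ.ops) → (Fin (σ.arity o) → Term σ V) → Term σ V

/-- Evaluation of a term in an algebra under an assignment of the variables. -/
def evalT {σ : Signature} {A V : Type*} (F : AlgOn σ A) (asg : V → A) : Term σ V → A
  | .var v => asg v
  | .op o ts => F.interp o fun i => evalT F asg (ts i)


namespace Stmt10Aux

variable {σ : Signature} {B : Type*}

def mapVar {σ : Signature} {V W : Type*} (f : V → W) : Term σ V → Term σ W
  | .var v => .var (f v)
  | .op o ts => .op o fun i => mapVar f (ts i)

lemma evalT_mapVar (F : AlgOn σ B) {V W : Type*} (f : V → W) (asg : W → B) (t : Term σ V) :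
    evalT F asg (mapVar f t) = evalT F (asg ∘ f) t := by
  induction t with
  | var v => rfl
  | op o ts ih => simp only [mapVar, evalT, ih]

variable {m : ℕ}

/-- swap the x-variables and the y-variables -/
def swapMap (m : ℕ) : (Fin m ⊕ Fin m ⊕ ℕ) → (Fin m ⊕ Fin m ⊕ ℕ) :=
  Sum.elim (Sum.inr ∘ Sum.inl) (Sum.elim Sum.inl (Sum.inr ∘ Sum.inr))

lemma elim_swapMap (xs ys : Fin m → B) (zs : ℕ → B) :
    Sum.elim xs (Sum.elim ys zs) ∘ swapMap m = Sum.elim ys (Sum.elim xs zs) := by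
  funext v; rcases v with i | i | k <;> rfl

/-- relabel the z-variables -/
def zMap (m : ℕ) (f : ℕ → ℕ) : (Fin m ⊕ Fin m ⊕ ℕ) → (Fin m ⊕ Fin m ⊕ ℕ) :=
  Sum.elim Sum.inl (Sum.elim (Sum.inr ∘ Sum.inl) (Sum.inr ∘ Sum.inr ∘ f))

lemma evalT_swap (F : AlgOn σ B) {m : ℕ} (u v : Fin m → B) (zs : ℕ → B)
    (s : Term σ (Fin m ⊕ Fin m ⊕ ℕ)) :
    evalT F (Sum.elim u (Sum.elim v zs)) (mapVar (swapMap m) s) =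
      evalT F (Sum.elim v (Sum.elim u zs)) s := by
  rw [evalT_mapVar, elim_swapMap]

lemma elim_zMap (xs ys : Fin m → B) (zs : ℕ → B) (f : ℕ → ℕ) :
    Sum.elim xs (Sum.elim ys zs) ∘ zMap m f = Sum.elim xs (Sum.elim ys (zs ∘ f)) := by
  funext v; rcases v with i | i | k <;> rfl

/-- A Mal'cev chain of length `n` from `a` to `b`. -/
def ChainN (F : AlgOn σ B) (xs ys : Fin m → B) (n : ℕ) (a b : B) : Prop :=
  ∃ (zs : ℕ → B) (t : ℕ → Term σ (Fin m ⊕ Fin m ⊕ ℕ)),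
    a = evalT F (Sum.elim xs (Sum.elim ys zs)) (t 0) ∧
    b = evalT F (Sum.elim xs (Sum.elim ys zs)) (t n) ∧
    ∀ j < n, evalT F (Sum.elim ys (Sum.elim xs zs)) (t j) =
      evalT F (Sum.elim xs (Sum.elim ys zs)) (t (j + 1))

variable (F : AlgOn σ B) (xs ys : Fin m → B)

def consF {α : Type*} (a : α) (f : ℕ → α) : ℕ → α
  | 0 => a
  | k + 1 => f k

lemma consF_comp_succ {α : Type*} (a : α) (f : ℕ → α) : consF a f ∘ Nat.succ = f := rfl

lemma chainN_refl (n : ℕ) (a : B) : ChainN F xs ys n a a := by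
  refine ⟨fun _ => a, fun _ => .var (.inr (.inr 0)), rfl, rfl, fun j hj => rfl⟩

lemma chainN_succ {n : ℕ} {a b : B} (h : ChainN F xs ys n a b) :
    ChainN F xs ys (n + 1) a b := by
  obtain ⟨zs, t, ha, hb, hc⟩ := h
  refine ⟨consF a zs, consF (Term.var (Sum.inr (Sum.inr 0)) : Term σ (Fin m ⊕ Fin m ⊕ ℕ)) (fun j => mapVar (zMap m Nat.succ) (t j)),
    rfl, ?_, ?_⟩
  · show b = evalT F _ (mapVar (zMap m Nat.succ) (t n))
    rw [evalT_mapVar, elim_zMap, consF_comp_succ]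
    exact hb
  · intro j hj
    cases j with
    | zero =>
      show (consF a zs) 0 = evalT F _ (mapVar (zMap m Nat.succ) (t 0))
      rw [evalT_mapVar, elim_zMap, consF_comp_succ]
      exact ha
    | succ j =>
      show evalT F _ (mapVar (zMap m Nat.succ) (t j)) = evalT F _ (mapVar (zMap m Nat.succ) (t (j+1)))
      rw [evalT_mapVar, elim_zMap, consF_comp_succ, evalT_mapVar, elim_zMap, consF_comp_succ]
      exact hc j (by omega)

lemma chainN_mono {n N : ℕ} (hn : n ≤ N) {a b : B} (h : ChainN F xs ys n a b) :
    ChainN F xs ys N a b := by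
  induction N with
  | zero => exact (Nat.le_zero.mp hn) ▸ h
  | succ N ih =>
    rcases Nat.lt_or_ge n (N+1) with h' | h'
    · exact chainN_succ F xs ys (ih (by omega))
    · have : n = N + 1 := by omega
      exact this ▸ h

lemma chainN_symm {n : ℕ} {a b : B} (h : ChainN F xs ys n a b) :
    ChainN F xs ys (n + 2) b a := by
  obtain ⟨zs, t, ha, hb, hc⟩ := h
  refine ⟨zs, fun j => if j = 0 then t n else if j ≤ n + 1 then
      mapVar (swapMap m) (t (n + 1 - j)) else t 0, ?_, ?_, ?_⟩
  · beta_reduce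
    simpa using hb
  · beta_reduce
    simp only [if_neg (by omega : ¬ n + 2 = 0), if_neg (by omega : ¬ n + 2 ≤ n + 1)]
    exact ha
  · intro j hj
    beta_reduce
    rcases eq_or_ne j 0 with rfl | hj0
    · simp only [if_pos rfl, if_neg (by omega : ¬ (1:ℕ) = 0), if_pos (by omega : 1 ≤ n + 1)]
      rw [evalT_swap]
      norm_num
    · rcases Nat.lt_or_ge j (n + 1) with hj1 | hj1
      · -- 1 ≤ j ≤ n
        simp only [if_neg hj0, if_pos (by omega : j ≤ n + 1),
          if_neg (by omega : ¬ j + 1 = 0), if_pos (by omega : j + 1 ≤ n + 1)]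
        rw [evalT_swap, evalT_swap]
        have h1 : n + 1 - j = (n - j) + 1 := by omega
        have h2 : n + 1 - (j + 1) = n - j := by omega
        rw [h1, h2]
        exact (hc (n - j) (by omega)).symm
      · -- j = n + 1
        have hj2 : j = n + 1 := by omega
        subst hj2
        simp only [if_neg (by omega : ¬ n + 1 = 0), if_pos (le_refl (n+1)),
          if_neg (by omega : ¬ n + 1 + 1 = 0), if_neg (by omega : ¬ n + 1 + 1 ≤ n + 1)]
        rw [evalT_swap]
        congr 2
        omega

lemma chainN_trans {n n' : ℕ} {a b c : B} (h : ChainN F xs ys n a b)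
    (h' : ChainN F xs ys n' b c) : ChainN F xs ys (n + n' + 3) a c := by
  obtain ⟨zs, t, ha, hb, hc⟩ := h
  obtain ⟨zs', t', ha', hb', hc'⟩ := h'
  set Z : ℕ → B := fun p => if p = 0 then b else if p % 2 = 1 then zs' (p / 2)
    else zs (p / 2 - 1) with hZ
  have hZeven : Z ∘ (fun k => 2 * k + 2) = zs := by
    funext k; simp only [Function.comp, hZ]
    rw [if_neg (by omega), if_neg (by omega)]
    congr 1; omega
  have hZodd : Z ∘ (fun k => 2 * k + 1) = zs' := by
    funext k; simp only [Function.comp, hZ]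
    rw [if_neg (by omega), if_pos (by omega)]
    congr 1; omega
  set e : Term σ (Fin m ⊕ Fin m ⊕ ℕ) → Term σ (Fin m ⊕ Fin m ⊕ ℕ) :=
    mapVar (zMap m (fun k => 2 * k + 2)) with he
  set e' : Term σ (Fin m ⊕ Fin m ⊕ ℕ) → Term σ (Fin m ⊕ Fin m ⊕ ℕ) :=
    mapVar (zMap m (fun k => 2 * k + 1)) with he'
  have Ee : ∀ (u v : Fin m → B) (s : Term σ _),
      evalT F (Sum.elim u (Sum.elim v Z)) (e s) = evalT F (Sum.elim u (Sum.elim v zs)) s := by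
    intro u v s; rw [he, evalT_mapVar, elim_zMap, hZeven]
  have Ee' : ∀ (u v : Fin m → B) (s : Term σ _),
      evalT F (Sum.elim u (Sum.elim v Z)) (e' s) = evalT F (Sum.elim u (Sum.elim v zs')) s := by
    intro u v s; rw [he', evalT_mapVar, elim_zMap, hZodd]
  refine ⟨Z, fun j => if j ≤ n then e (t j) else if j = n + 1 then mapVar (swapMap m) (e (t n))
    else if j = n + 2 then .var (.inr (.inr 0)) else e' (t' (j - (n + 3))), ?_, ?_, ?_⟩
  · beta_reduce
    simp only [if_pos (Nat.zero_le n)]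
    rw [Ee]; exact ha
  · beta_reduce
    rw [if_neg (by omega : ¬ n + n' + 3 ≤ n), if_neg (by omega : ¬ n + n' + 3 = n + 1),
      if_neg (by omega : ¬ n + n' + 3 = n + 2)]
    have : n + n' + 3 - (n + 3) = n' := by omega
    rw [this, Ee']; exact hb'
  · intro j hj
    beta_reduce
    rcases Nat.lt_or_ge j n with h1 | h1
    · rw [if_pos (by omega), if_pos (by omega), Ee, Ee]
      exact hc j h1
    rcases eq_or_ne j n with rfl | h2
    · rw [if_pos le_rfl, if_neg (by omega), if_pos rfl, evalT_swap]
    rcases eq_or_ne j (n + 1) with rfl | h3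
    · rw [if_neg (by omega), if_pos rfl, if_neg (by omega), if_neg (by omega),
        if_pos rfl, evalT_swap, Ee]
      show _ = Z 0
      rw [hZ]
      simp only [if_pos rfl]
      exact hb.symm
    rcases eq_or_ne j (n + 2) with rfl | h4
    · rw [if_neg (by omega), if_neg (by omega), if_pos rfl, if_neg (by omega),
        if_neg (by omega), if_neg (by omega)]
      have : n + 2 + 1 - (n + 3) = 0 := by omega
      rw [this, Ee']
      show Z 0 = _
      rw [hZ]
      simp only [if_pos rfl]
      exact ha'
    · -- n + 3 ≤ j < n + n' + 3
      rw [if_neg (by omega), if_neg (by omega), if_neg (by omega),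
        if_neg (by omega), if_neg (by omega), if_neg (by omega), Ee', Ee']
      have h5 : j + 1 - (n + 3) = (j - (n + 3)) + 1 := by omega
      rw [h5]
      exact hc' (j - (n + 3)) (by omega)

/-- The chain relation. -/
def ChainRel (F : AlgOn σ B) (xs ys : Fin m → B) (a b : B) : Prop :=
  ∃ n : ℕ, 0 < n ∧ ChainN F xs ys n a b

lemma chainRel_isCon (pt : B) : IsCon F (ChainRel F xs ys) := by
  constructor
  · constructor
    · exact fun a => ⟨1, one_pos, chainN_refl F xs ys 1 a⟩
    · rintro a b ⟨n, hn, h⟩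
      exact ⟨n + 2, by omega, chainN_symm F xs ys h⟩
    · rintro a b c ⟨n, hn, h⟩ ⟨n', hn', h'⟩
      exact ⟨n + n' + 3, by omega, chainN_trans F xs ys h h'⟩
  · intro o u v huv
    choose nn hnn hch using huv
    set N : ℕ := Finset.univ.sup nn + 1 with hN
    have h2 : ∀ i, ChainN F xs ys N (u i) (v i) := by
      intro i
      exact chainN_mono F xs ys (by
        have := Finset.le_sup (f := nn) (Finset.mem_univ i)
        omega) (hch i)
    simp only [ChainN] at h2
    choose Z T hT1 hT2 hT3 using h2
    refine ⟨N, by omega, fun p => if h : (Nat.unpair p).1 < σ.arity o then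
        Z ⟨(Nat.unpair p).1, h⟩ (Nat.unpair p).2 else pt,
      fun j => Term.op o (fun i => mapVar (zMap m (fun k => Nat.pair i.val k)) (T i j)),
      ?_, ?_, ?_⟩
    all_goals
      have hpair : ∀ i : Fin (σ.arity o),
          (fun p => if h : (Nat.unpair p).1 < σ.arity o then
            Z ⟨(Nat.unpair p).1, h⟩ (Nat.unpair p).2 else pt) ∘ (fun k => Nat.pair i.val k)
          = Z i := by
        intro i
        funext k
        simp only [Function.comp, Nat.unpair_pair]
        rw [dif_pos i.isLt]
    · show F.interp o u = F.interp o _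
      congr 1
      funext i
      rw [evalT_mapVar, elim_zMap, hpair i]
      exact hT1 i
    · show F.interp o v = F.interp o _
      congr 1
      funext i
      rw [evalT_mapVar, elim_zMap, hpair i]
      exact hT2 i
    · intro j hj
      show F.interp o _ = F.interp o _
      congr 1
      funext i
      rw [evalT_mapVar, elim_zMap, hpair i, evalT_mapVar, elim_zMap, hpair i]
      exact hT3 i j (by omega)

lemma chainRel_gen (a b : B) (h : ∃ i : Fin m, a = xs i ∧ b = ys i) :
    ChainRel F xs ys a b := by
  obtain ⟨i, ha, hb⟩ := h
  exact ⟨1, one_pos, fun _ => a,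
    consF (Term.var (Sum.inl i)) (fun _ => Term.var (Sum.inr (Sum.inl i))), ha, hb,
    fun j hj => by
      obtain rfl : j = 0 := by omega
      rfl⟩

lemma isCon_eval_pair {r : B → B → Prop} (hr : IsCon F r) (h : ∀ i, r (xs i) (ys i))
    (zs : ℕ → B) (s : Term σ (Fin m ⊕ Fin m ⊕ ℕ)) :
    r (evalT F (Sum.elim xs (Sum.elim ys zs)) s) (evalT F (Sum.elim ys (Sum.elim xs zs)) s) := by
  induction s with
  | var v =>
    rcases v with i | i | k
    · exact h i
    · exact hr.1.symm (h i)
    · exact hr.1.refl _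
  | op o ts ih => exact hr.2 o _ _ ih

end Stmt10Aux

theorem stmt10 {σ : Signature} {B : Type*} (F : AlgOn σ B) (m : ℕ) (hm : 0 < m)
    (x y : B) (xs ys : Fin m → B) :
    cgGen F (fun u v => u = x ∧ v = y) ≤
        cgGen F (fun u v => ∃ i : Fin m, u = xs i ∧ v = ys i) ↔
      ∃ n : ℕ, 0 < n ∧ ∃ (zs : ℕ → B) (t : ℕ → Term σ (Fin m ⊕ Fin m ⊕ ℕ)),
        x = evalT F (Sum.elim xs (Sum.elim ys zs)) (t 0) ∧
        y = evalT F (Sum.elim xs (Sum.elim ys zs)) (t n) ∧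
        ∀ j < n, evalT F (Sum.elim ys (Sum.elim xs zs)) (t j) =
          evalT F (Sum.elim xs (Sum.elim ys zs)) (t (j + 1)) := by
  open Stmt10Aux in
  constructor
  · intro H
    have hxy : cgGen F (fun u v => ∃ i : Fin m, u = xs i ∧ v = ys i) x y :=
      H x y (fun r hr hs => hs x y ⟨rfl, rfl⟩)
    exact hxy (ChainRel F xs ys) (chainRel_isCon F xs ys x)
      (fun a b hab => chainRel_gen F xs ys a b hab)
  · rintro ⟨n, hn, zs, t, hx, hy, hcond⟩ a b hab r hr hs
    have hgen : ∀ i, r (xs i) (ys i) := fun i => hs _ _ ⟨i, rfl, rfl⟩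
    have main : ∀ j, j ≤ n → r x (evalT F (Sum.elim xs (Sum.elim ys zs)) (t j)) := by
      intro j
      induction j with
      | zero => intro _; exact hx ▸ hr.1.refl x
      | succ j ih =>
        intro hj
        have h1 := hr.1.trans (ih (by omega)) (isCon_eval_pair F xs ys hr hgen zs (t j))
        rwa [hcond j (by omega)] at h1
    have rxy : r x y := by
      have := main n le_rfl
      rwa [← hy] at this
    exact hab r hr (fun u v huv => by rw [huv.1, huv.2]; exact rxy)
end

section
/- Let A be a pregamp and I an ideal of the join-semilattice Ã. Then θ_I = {(x,y) ∈ A² : δ_A(x,y) ∈ I} is an equivalence relation on A; the quotient set A/I carries a well-defined partial algebra structure with Def_ℓ(A/I) = {x⃗/I : x⃗ ∈ Def_ℓ(A)} and ℓ(x⃗/I) = ℓ(x⃗)/I; and δ_{A/I}(x/I, y/I) = δ_A(x,y)/I is a well-defined map A/I × A/I → Ã/I making (A/I, δ_{A/I}, Ã/I) a pregamp. -/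
/-- An ideal of a join-semilattice with zero: a lower subset containing `⊥`
closed under binary joins. -/
structure SemIdeal (S : Type*) [SemilatticeSup S] [OrderBot S] where
  carrier : Set S
  bot_mem : ⊥ ∈ carrier
  lower : ∀ {x y : S}, x ≤ y → y ∈ carrier → x ∈ carrier
  sup_mem : ∀ {x y : S}, x ∈ carrier → y ∈ carrier → x ⊔ y ∈ carrier

namespace SemIdeal

variable {S : Type*} [SemilatticeSup S] [OrderBot S] (I : SemIdeal S)

/-- The congruence `θ_I` associated with an ideal. -/
def setoid : Setoid S where
  r x y := ∃ u ∈ I.carrier, x ⊔ u = y ⊔ u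
  iseqv := by
    refine ⟨fun x => ⟨⊥, I.bot_mem, rfl⟩, ?_, ?_⟩
    · rintro x y ⟨u, hu, h⟩
      exact ⟨u, hu, h.symm⟩
    · rintro x y z ⟨u, hu, h1⟩ ⟨v, hv, h2⟩
      refine ⟨u ⊔ v, I.sup_mem hu hv, ?_⟩
      calc x ⊔ (u ⊔ v) = x ⊔ u ⊔ v := (sup_assoc ..).symm
        _ = y ⊔ u ⊔ v := by rw [h1]
        _ = y ⊔ v ⊔ u := sup_right_comm ..
        _ = z ⊔ v ⊔ u := by rw [h2]
        _ = z ⊔ (u ⊔ v) := by rw [sup_assoc, sup_comm v u]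

/-- The quotient semilattice `S/I`. -/
def Quot : Type _ := Quotient I.setoid

/-- The canonical projection `S → S/I`. -/
def mkQ (a : S) : I.Quot := Quotient.mk I.setoid a

instance : Max I.Quot :=
  ⟨fun q1 q2 => Quotient.liftOn₂ q1 q2 (fun a b => I.mkQ (a ⊔ b)) (by
    rintro a b a' b' ⟨u, hu, h1⟩ ⟨v, hv, h2⟩
    refine Quotient.sound ⟨u ⊔ v, I.sup_mem hu hv, ?_⟩
    calc a ⊔ b ⊔ (u ⊔ v) = (a ⊔ u) ⊔ (b ⊔ v) := sup_sup_sup_comm ..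
      _ = (a' ⊔ u) ⊔ (b' ⊔ v) := by rw [h1, h2]
      _ = a' ⊔ b' ⊔ (u ⊔ v) := (sup_sup_sup_comm ..).symm)⟩

theorem mkQ_sup (a b : S) : I.mkQ a ⊔ I.mkQ b = I.mkQ (a ⊔ b) := rfl

instance : SemilatticeSup I.Quot :=
  SemilatticeSup.mk'
    (fun q1 q2 => Quotient.inductionOn₂ q1 q2 fun a b => by
      change I.mkQ (a ⊔ b) = I.mkQ (b ⊔ a); rw [sup_comm])
    (fun q1 q2 q3 => Quotient.inductionOn₃ q1 q2 q3 fun a b c => by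
      change I.mkQ (a ⊔ b ⊔ c) = I.mkQ (a ⊔ (b ⊔ c)); rw [sup_assoc])
    (fun q => Quotient.inductionOn q fun a => by
      change I.mkQ (a ⊔ a) = I.mkQ a; rw [sup_idem])

instance : OrderBot I.Quot where
  bot := I.mkQ ⊥
  bot_le := fun q => Quotient.inductionOn q fun a =>
    sup_eq_right.mp (by change I.mkQ (⊥ ⊔ a) = I.mkQ a; rw [bot_sup_eq])

end SemIdeal

/-- A partial algebra of similarity type `σ` on the set `A`: each operation
symbol gets a domain of definition and a partial operation. -/
structure PartAlg (σ : Signature) (A : Type*) where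
  Dom : ∀ o : σ.ops, Set ((Fin (σ.arity o)) → A)
  op : ∀ (o : σ.ops) (x : Fin (σ.arity o) → A), x ∈ Dom o → A

/-- `EvalR P asg t a` : the term `t` is defined in the partial algebra `P` under
the assignment `asg` and evaluates to `a`. -/
inductive EvalR {σ : Signature} {A V : Type*} (P : PartAlg σ A) (asg : V → A) :
    Term σ V → A → Prop where
  | var (v : V) : EvalR P asg (.var v) (asg v)
  | op (o : σ.ops) (ts : Fin (σ.arity o) → Term σ V) (vals : Fin (σ.arity o) → A)
      (h : ∀ i, EvalR P asg (ts i) (vals i)) (hd : vals ∈ P.Dom o) :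
      EvalR P asg (.op o ts) (P.op o vals hd)

/-- A morphism of partial algebras. -/
def IsPartHom {σ : Signature} {A B : Type*} (PA : PartAlg σ A) (PB : PartAlg σ B)
    (f : A → B) : Prop :=
  ∀ (o : σ.ops) (x : Fin (σ.arity o) → A) (hx : x ∈ PA.Dom o),
    ∃ h : (fun i => f (x i)) ∈ PB.Dom o, PB.op o (fun i => f (x i)) h = f (PA.op o x hx)

/-- A semilattice-valued distance making `(A, δ, S)` a pregamp. -/
structure IsPregamp {σ : Signature} {A S : Type*} [SemilatticeSup S] [OrderBot S]
    (P : PartAlg σ A) (δ : A → A → S) : Prop where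
  eq_bot : ∀ x y : A, δ x y = ⊥ ↔ x = y
  symm : ∀ x y : A, δ x y = δ y x
  triangle : ∀ x y z : A, δ x y ≤ δ x z ⊔ δ z y
  compat : ∀ (o : σ.ops) (x y : Fin (σ.arity o) → A) (hx : x ∈ P.Dom o) (hy : y ∈ P.Dom o),
    δ (P.op o x hx) (P.op o y hy) ≤ Finset.univ.sup fun k => δ (x k) (y k)

section Aux

variable {σ : Signature} {A S : Type*} [SemilatticeSup S] [OrderBot S]

theorem SemIdeal.mkQ_mono (I : SemIdeal S) {a b : S} (h : a ≤ b) : I.mkQ a ≤ I.mkQ b :=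
  sup_eq_right.mp (by rw [I.mkQ_sup, sup_eq_right.mpr h])

theorem SemIdeal.mkQ_eq_bot (I : SemIdeal S) {a : S} : I.mkQ a = ⊥ ↔ a ∈ I.carrier := by
  constructor
  · intro h
    have h' : I.setoid.r a ⊥ := Quotient.exact h
    obtain ⟨u, hu, he⟩ := h'
    exact I.lower (le_trans le_sup_left (le_of_eq (he.trans (bot_sup_eq u)))) hu
  · intro h
    exact Quotient.sound ⟨a, h, by rw [sup_idem, bot_sup_eq]⟩

theorem SemIdeal.sup_mem_finset (I : SemIdeal S) {n : ℕ} (f : Fin n → S)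
    (h : ∀ k, f k ∈ I.carrier) : Finset.univ.sup f ∈ I.carrier :=
  Finset.sup_induction I.bot_mem (fun _ ha _ hb => I.sup_mem ha hb) (fun k _ => h k)

variable (P : PartAlg σ A) (δ : A → A → S) (hP : IsPregamp P δ) (I : SemIdeal S)

include hP

theorem pregamp_rel_equiv : Equivalence (fun x y : A => δ x y ∈ I.carrier) := by
  refine ⟨fun x => ?_, fun {x y} h => ?_, fun {x y z} h1 h2 => ?_⟩
  · rw [(hP.eq_bot x x).mpr rfl]; exact I.bot_mem
  · rwa [hP.symm]
  · exact I.lower (hP.triangle x z y) (I.sup_mem h1 h2)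

theorem pregamp_mk_eq_iff {x y : A} :
    Quot.mk (fun x y : A => δ x y ∈ I.carrier) x =
      Quot.mk (fun x y : A => δ x y ∈ I.carrier) y ↔ δ x y ∈ I.carrier := by
  rw [Quot.eq, (pregamp_rel_equiv P δ hP I).eqvGen_iff]

/-- Well-definedness of the distance on the quotient, one side. -/
theorem pregamp_delta_wd {x x' : A} (h : δ x x' ∈ I.carrier) (y : A) :
    I.mkQ (δ x y) = I.mkQ (δ x' y) := by
  refine Quotient.sound ⟨δ x x', h, le_antisymm (sup_le ?_ le_sup_right)
    (sup_le ?_ le_sup_right)⟩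
  · exact (hP.triangle x y x').trans (by rw [sup_comm])
  · exact (hP.triangle x' y x).trans (by rw [hP.symm x' x, sup_comm])

/-- The distance on the quotient. -/
noncomputable def pregampQuotDelta :
    (Quot fun x y : A => δ x y ∈ I.carrier) →
    (Quot fun x y : A => δ x y ∈ I.carrier) → I.Quot :=
  Quot.lift₂ (fun x y => I.mkQ (δ x y))
    (fun a b₁ b₂ h => by
      show I.mkQ (δ a b₁) = I.mkQ (δ a b₂)
      rw [hP.symm a b₁, hP.symm a b₂]
      exact pregamp_delta_wd P δ hP I h a)
    (fun a₁ a₂ b h => pregamp_delta_wd P δ hP I h b)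

/-- Well-definedness of operations on the quotient. -/
theorem pregamp_op_wd (o : σ.ops) {x y : Fin (σ.arity o) → A}
    (hx : x ∈ P.Dom o) (hy : y ∈ P.Dom o) (h : ∀ i, δ (x i) (y i) ∈ I.carrier) :
    Quot.mk (fun x y : A => δ x y ∈ I.carrier) (P.op o x hx) =
      Quot.mk (fun x y : A => δ x y ∈ I.carrier) (P.op o y hy) :=
  Quot.sound (I.lower (hP.compat o x y hx hy)
    (I.sup_mem_finset _ h))

omit hP in
/-- The quotient partial algebra. -/
noncomputable def pregampQuot : PartAlg σ (Quot fun x y : A => δ x y ∈ I.carrier) where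
  Dom o := {q | ∃ x ∈ P.Dom o, (fun i => Quot.mk (fun x y : A => δ x y ∈ I.carrier) (x i)) = q}
  op o _ hq := Quot.mk _ (P.op o hq.choose hq.choose_spec.1)

end Aux

theorem stmt11 {σ : Signature} {A S : Type*} [SemilatticeSup S] [OrderBot S]
    (P : PartAlg σ A) (δ : A → A → S) (hP : IsPregamp P δ) (I : SemIdeal S) :
    -- `θ_I` is an equivalence relation on `A`
    Equivalence (fun x y : A => δ x y ∈ I.carrier) ∧
    -- the quotient carries a well-defined partial algebra structure and distance
    -- making it a pregamp
    ∃ (Q : PartAlg σ (Quot fun x y : A => δ x y ∈ I.carrier))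
      (δ' : (Quot fun x y : A => δ x y ∈ I.carrier) →
            (Quot fun x y : A => δ x y ∈ I.carrier) → I.Quot),
      (∀ o : σ.ops, Q.Dom o =
        {q | ∃ x ∈ P.Dom o, (fun i => Quot.mk (fun x y : A => δ x y ∈ I.carrier) (x i)) = q}) ∧
      (∀ (o : σ.ops) (x : Fin (σ.arity o) → A) (hx : x ∈ P.Dom o)
        (hq : (fun i => Quot.mk (fun x y : A => δ x y ∈ I.carrier) (x i)) ∈ Q.Dom o),
        Q.op o _ hq = Quot.mk (fun x y : A => δ x y ∈ I.carrier) (P.op o x hx)) ∧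
      (∀ x y : A, δ' (Quot.mk (fun x y : A => δ x y ∈ I.carrier) x)
          (Quot.mk (fun x y : A => δ x y ∈ I.carrier) y) = I.mkQ (δ x y)) ∧
      IsPregamp Q δ' := by
  refine ⟨pregamp_rel_equiv P δ hP I, pregampQuot P δ I, pregampQuotDelta P δ hP I,
    fun o => rfl, ?_, fun x y => rfl, ?_, ?_, ?_, ?_⟩
  · intro o x hx hq
    exact pregamp_op_wd P δ hP I o hq.choose_spec.1 hx
      (fun i => (pregamp_mk_eq_iff P δ hP I).mp (congrFun hq.choose_spec.2 i))
  · intro q q'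
    induction q using Quot.ind with | _ x => ?_
    induction q' using Quot.ind with | _ y => ?_
    show I.mkQ (δ x y) = ⊥ ↔ _
    rw [I.mkQ_eq_bot, pregamp_mk_eq_iff P δ hP I]
  · intro q q'
    induction q using Quot.ind with | _ x => ?_
    induction q' using Quot.ind with | _ y => ?_
    show I.mkQ (δ x y) = I.mkQ (δ y x)
    rw [hP.symm]
  · intro q q' q''
    induction q using Quot.ind with | _ x => ?_
    induction q' using Quot.ind with | _ y => ?_
    induction q'' using Quot.ind with | _ z => ?_
    show I.mkQ (δ x y) ≤ I.mkQ (δ x z) ⊔ I.mkQ (δ z y)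
    rw [I.mkQ_sup]
    exact I.mkQ_mono (hP.triangle x y z)
  · intro o qx qy hqx hqy
    have ex := hqx.choose_spec.2
    have ey := hqy.choose_spec.2
    calc pregampQuotDelta P δ hP I ((pregampQuot P δ I).op o qx hqx)
          ((pregampQuot P δ I).op o qy hqy)
        = I.mkQ (δ (P.op o hqx.choose hqx.choose_spec.1)
            (P.op o hqy.choose hqy.choose_spec.1)) := rfl
      _ ≤ I.mkQ (Finset.univ.sup fun k => δ (hqx.choose k) (hqy.choose k)) :=
          I.mkQ_mono (hP.compat o _ _ _ _)
      _ = Finset.univ.sup fun k => I.mkQ (δ (hqx.choose k) (hqy.choose k)) :=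
          Finset.comp_sup_eq_sup_comp I.mkQ (fun a b => (I.mkQ_sup a b).symm) rfl
      _ = Finset.univ.sup fun k => pregampQuotDelta P δ hP I (qx k) (qy k) :=
          Finset.sup_congr rfl fun k _ => by
            rw [← congrFun ex k, ← congrFun ey k]; rfl
end

section
/- If a pregamp A satisfies an identity t₁ = t₂ for every quotient (i.e., A is a pregamp of the variety defined by t₁ = t₂), then every subpregamp B of A also satisfies t₁ = t₂ for every quotient, and every ideal-induced image of A satisfies t₁ = t₂ for every quotient. In particular, subpregamps and ideal-induced images of pregamps of a variety V are pregamps of V. -/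
/-- The partial algebra `P` satisfies the identity `t₁ = t₂`: whenever both terms
are defined under an assignment, their values agree. -/
def SatisfiesId {σ : Signature} {A V : Type*} (P : PartAlg σ A) (t1 t2 : Term σ V) : Prop :=
  ∀ (asg : V → A) (a b : A), EvalR P asg t1 a → EvalR P asg t2 b → a = b

/-- `Q` is the canonical quotient partial algebra structure of `P` by the
equivalence `r`: domains are images of domains and operations are computed on
representatives. -/
def IsQuotStruct {σ : Signature} {A : Type*} (P : PartAlg σ A) (r : A → A → Prop)
    (Q : PartAlg σ (Quot r)) : Prop :=
  (∀ o : σ.ops, Q.Dom o = {q | ∃ x ∈ P.Dom o, (fun i => Quot.mk r (x i)) = q}) ∧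
  ∀ (o : σ.ops) (x : Fin (σ.arity o) → A) (hx : x ∈ P.Dom o)
    (hq : (fun i => Quot.mk r (x i)) ∈ Q.Dom o),
    Q.op o _ hq = Quot.mk r (P.op o x hx)

/-- A zero-preserving join-homomorphism is ideal-induced if it is surjective and
whenever `φ x = φ y` there is `z` with `x ⊔ z = y ⊔ z` and `φ z = ⊥`. -/
def IdealInduced {S T : Type*} [SemilatticeSup S] [OrderBot S] [SemilatticeSup T] [OrderBot T]
    (φ : SupBotHom S T) : Prop :=
  Function.Surjective φ ∧ ∀ x y : S, φ x = φ y → ∃ z : S, x ⊔ z = y ⊔ z ∧ φ z = ⊥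

section Aux

variable {σ : Signature}

theorem PartAlg.op_congr {A : Type*} (P : PartAlg σ A) (o : σ.ops)
    {x y : Fin (σ.arity o) → A} (h : x = y) (hx : x ∈ P.Dom o) (hy : y ∈ P.Dom o) :
    P.op o x hx = P.op o y hy := by subst h; rfl

theorem eval_map {X Y V : Type*} {PX : PartAlg σ X} {PY : PartAlg σ Y} {g : X → Y}
    (hg : IsPartHom PX PY g) {asg : V → X} {t : Term σ V} {a : X}
    (h : EvalR PX asg t a) : EvalR PY (fun v => g (asg v)) t (g a) := by
  induction h with
  | var v => exact EvalR.var v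
  | op o ts vals h hd ih =>
      obtain ⟨hd', heq⟩ := hg o vals hd
      rw [← heq]
      exact EvalR.op o ts _ ih hd'

theorem satisfies_of_inj {X Y V : Type*} {PX : PartAlg σ X} {PY : PartAlg σ Y} {g : X → Y}
    (hg : IsPartHom PX PY g) (hinj : Function.Injective g) {t1 t2 : Term σ V}
    (h : SatisfiesId PY t1 t2) : SatisfiesId PX t1 t2 :=
  fun asg a b h1 h2 => hinj (h _ _ _ (eval_map hg h1) (eval_map hg h2))

theorem quot_mk_eq_iff {A : Type*} {r : A → A → Prop} (h : Equivalence r) {a b : A} :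
    Quot.mk r a = Quot.mk r b ↔ r a b :=
  ⟨fun he => (Equivalence.eqvGen_iff h).mp (Quot.eqvGen_exact he), Quot.sound⟩

theorem dist_equiv {A S : Type*} [SemilatticeSup S] [OrderBot S] {P : PartAlg σ A}
    {δ : A → A → S} (hP : IsPregamp P δ) (J : SemIdeal S) :
    Equivalence (fun x y : A => δ x y ∈ J.carrier) where
  refl x := by
    have : δ x x = ⊥ := (hP.eq_bot x x).mpr rfl
    simpa [this] using J.bot_mem
  symm {x y} h := by
    have := hP.symm x y
    simpa [← this] using h
  trans {x y z} h1 h2 := J.lower (hP.triangle x z y) (J.sup_mem h1 h2)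

theorem finsup_mem {S : Type*} [SemilatticeSup S] [OrderBot S] (J : SemIdeal S) {n : ℕ}
    (g : Fin n → S) (h : ∀ i, g i ∈ J.carrier) : Finset.univ.sup g ∈ J.carrier :=
  Finset.sup_induction J.bot_mem (fun _ ha _ hb => J.sup_mem ha hb) (fun i _ => h i)

theorem exists_quot {A S : Type*} [SemilatticeSup S] [OrderBot S]
    (P : PartAlg σ A) (δ : A → A → S) (hP : IsPregamp P δ) (J : SemIdeal S) :
    ∃ Q : PartAlg σ (Quot fun x y : A => δ x y ∈ J.carrier),
      IsQuotStruct P (fun x y : A => δ x y ∈ J.carrier) Q := by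
  classical
  have he := dist_equiv hP J
  refine ⟨⟨fun o => {q | ∃ x ∈ P.Dom o, (fun i => Quot.mk _ (x i)) = q},
    fun o q hq => Quot.mk _ (P.op o hq.choose hq.choose_spec.1)⟩, fun o => rfl, ?_⟩
  intro o x hx hq
  show Quot.mk _ (P.op o hq.choose hq.choose_spec.1) = Quot.mk _ (P.op o x hx)
  have hpt : ∀ i, δ (hq.choose i) (x i) ∈ J.carrier := fun i =>
    (quot_mk_eq_iff he).mp (congrFun hq.choose_spec.2 i)
  exact Quot.sound (J.lower (hP.compat o _ x hq.choose_spec.1 hx)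
    (finsup_mem J _ hpt))

end Aux

theorem stmt17 {σ : Signature} {A B A2 S T S2 : Type*}
    [SemilatticeSup S] [OrderBot S] [SemilatticeSup T] [OrderBot T]
    [SemilatticeSup S2] [OrderBot S2]
    (P : PartAlg σ A) (δ : A → A → S) (hP : IsPregamp P δ)
    (t1 t2 : Term σ ℕ)
    -- `A` satisfies the identity `t₁ = t₂` in every quotient
    (H : ∀ (I : SemIdeal S) (Q : PartAlg σ (Quot fun x y : A => δ x y ∈ I.carrier)),
      IsQuotStruct P (fun x y : A => δ x y ∈ I.carrier) Q → SatisfiesId Q t1 t2)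
    -- a subpregamp `B` of `A`, presented by a pair of embeddings
    (PB : PartAlg σ B) (δB : B → B → T) (hPB : IsPregamp PB δB)
    (j : B → A) (hj : IsPartHom PB P j) (hjinj : Function.Injective j)
    (e : SupBotHom T S) (heinj : Function.Injective e)
    (hecompat : ∀ x y : B, δ (j x) (j y) = e (δB x y))
    -- an ideal-induced image `A₂` of `A`
    (P2 : PartAlg σ A2) (δ2 : A2 → A2 → S2) (hP2 : IsPregamp P2 δ2)
    (f : A → A2) (hf : IsPartHom P P2 f) (hfsurj : Function.Surjective f)
    (hfdom : ∀ o : σ.ops, P2.Dom o = {y | ∃ x ∈ P.Dom o, (fun i => f (x i)) = y})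
    (ft : SupBotHom S S2) (hft : IdealInduced ft)
    (hfcompat : ∀ x y : A, δ2 (f x) (f y) = ft (δ x y)) :
    -- every quotient of the subpregamp satisfies `t₁ = t₂`
    (∀ (I : SemIdeal T) (Q : PartAlg σ (Quot fun x y : B => δB x y ∈ I.carrier)),
      IsQuotStruct PB (fun x y : B => δB x y ∈ I.carrier) Q → SatisfiesId Q t1 t2) ∧
    -- every quotient of the ideal-induced image satisfies `t₁ = t₂`
    (∀ (I : SemIdeal S2) (Q : PartAlg σ (Quot fun x y : A2 => δ2 x y ∈ I.carrier)),
      IsQuotStruct P2 (fun x y : A2 => δ2 x y ∈ I.carrier) Q → SatisfiesId Q t1 t2) := by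
  constructor
  · -- subpregamp
    intro I QB hQB
    -- e reflects the order
    have ereflect : ∀ a b : T, e a ≤ e b → a ≤ b := by
      intro a b h
      have h1 : e (a ⊔ b) = e b := by rw [map_sup]; exact sup_eq_right.mpr h
      exact sup_eq_right.mp (heinj h1)
    -- the ideal of S generated by e '' I
    set J : SemIdeal S :=
      { carrier := {s | ∃ t ∈ I.carrier, s ≤ e t}
        bot_mem := ⟨⊥, I.bot_mem, bot_le⟩
        lower := fun {x y} hxy ⟨t, ht, hle⟩ => ⟨t, ht, hxy.trans hle⟩
        sup_mem := fun {x y} ⟨t, ht, hle⟩ ⟨t', ht', hle'⟩ =>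
          ⟨t ⊔ t', I.sup_mem ht ht', by
            rw [map_sup]; exact sup_le_sup hle hle'⟩ } with hJ
    have key : ∀ x y : B, δB x y ∈ I.carrier ↔ δ (j x) (j y) ∈ J.carrier := by
      intro x y
      constructor
      · intro h; exact ⟨δB x y, h, le_of_eq (hecompat x y)⟩
      · rintro ⟨t, ht, hle⟩
        rw [hecompat] at hle
        exact I.lower (ereflect _ _ hle) ht
    obtain ⟨QA, hQA⟩ := exists_quot P δ hP J
    have hSat := H J QA hQA
    have heB := dist_equiv hPB I
    have heA := dist_equiv hP J
    -- the induced map on quotients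
    set g : Quot (fun x y : B => δB x y ∈ I.carrier) →
        Quot (fun x y : A => δ x y ∈ J.carrier) :=
      Quot.lift (fun b => Quot.mk _ (j b))
        (fun b b' h => Quot.sound ((key b b').mp h)) with hg
    have hginj : Function.Injective g := by
      intro q q' h
      obtain ⟨b, rfl⟩ := Quot.exists_rep q
      obtain ⟨b', rfl⟩ := Quot.exists_rep q'
      have : δ (j b) (j b') ∈ J.carrier := (quot_mk_eq_iff heA).mp h
      exact Quot.sound ((key b b').mpr this)
    have hgpart : IsPartHom QB QA g := by
      intro o x hx
      have hx' := hx
      rw [hQB.1] at hx'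
      obtain ⟨b, hb, hbe⟩ := hx'
      subst hbe
      obtain ⟨hjd, hjop⟩ := hj o b hb
      have htup : (fun i => g (Quot.mk _ (b i))) =
          fun i => Quot.mk (fun x y : A => δ x y ∈ J.carrier) (j (b i)) := rfl
      have hmem : (fun i => g (Quot.mk _ (b i))) ∈ QA.Dom o := by
        rw [hQA.1]
        exact ⟨fun i => j (b i), hjd, rfl⟩
      refine ⟨hmem, ?_⟩
      have hmem' : (fun i => Quot.mk (fun x y : A => δ x y ∈ J.carrier) (j (b i))) ∈
          QA.Dom o := htup ▸ hmem
      calc QA.op o _ hmem = QA.op o _ hmem' := PartAlg.op_congr QA o htup hmem hmem'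
        _ = Quot.mk _ (P.op o (fun i => j (b i)) hjd) := hQA.2 o _ hjd hmem'
        _ = Quot.mk _ (j (PB.op o b hb)) := by rw [hjop]
        _ = g (QB.op o (fun i => Quot.mk _ (b i)) hx) := by rw [hQB.2 o b hb hx]
    exact satisfies_of_inj hgpart hginj hSat
  · -- ideal-induced image
    intro I Q2 hQ2
    classical
    -- the preimage ideal
    set J : SemIdeal S :=
      { carrier := {s | ft s ∈ I.carrier}
        bot_mem := by show ft ⊥ ∈ I.carrier; rw [map_bot]; exact I.bot_mem
        lower := fun {x y} hxy hy => I.lower (OrderHomClass.mono ft hxy) hy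
        sup_mem := fun {x y} hx hy => by
          show ft (x ⊔ y) ∈ I.carrier; rw [map_sup]; exact I.sup_mem hx hy } with hJ
    have key : ∀ a b : A, δ2 (f a) (f b) ∈ I.carrier ↔ δ a b ∈ J.carrier := by
      intro a b; rw [hfcompat]; exact Iff.rfl
    obtain ⟨QA, hQA⟩ := exists_quot P δ hP J
    have hSat := H J QA hQA
    have heA := dist_equiv hP J
    have he2 := dist_equiv hP2 I
    -- a section of f via choice
    have hsec : ∀ a2 : A2, f (hfsurj a2).choose = a2 := fun a2 => (hfsurj a2).choose_spec
    set g : Quot (fun x y : A2 => δ2 x y ∈ I.carrier) →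
        Quot (fun x y : A => δ x y ∈ J.carrier) :=
      Quot.lift (fun a2 => Quot.mk _ (hfsurj a2).choose)
        (fun a2 b2 h => by
          refine Quot.sound ((key _ _).mp ?_)
          rw [hsec, hsec]; exact h) with hg
    have hg0 : ∀ a : A, g (Quot.mk _ (f a)) = Quot.mk _ a := by
      intro a
      refine Quot.sound ((key _ _).mp ?_)
      rw [hsec]
      have : δ2 (f a) (f a) = ⊥ := (hP2.eq_bot _ _).mpr rfl
      rw [this]; exact I.bot_mem
    have hginj : Function.Injective g := by
      intro q q' h
      obtain ⟨a2, rfl⟩ := Quot.exists_rep q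
      obtain ⟨b2, rfl⟩ := Quot.exists_rep q'
      obtain ⟨a, rfl⟩ := hfsurj a2
      obtain ⟨b, rfl⟩ := hfsurj b2
      rw [hg0, hg0] at h
      have : δ a b ∈ J.carrier := (quot_mk_eq_iff heA).mp h
      exact Quot.sound ((key a b).mpr this)
    have hgpart : IsPartHom Q2 QA g := by
      intro o q hq
      have hq' := hq
      rw [hQ2.1] at hq'
      obtain ⟨y, hy, hye⟩ := hq'
      subst hye
      have hy' := hy
      rw [hfdom o] at hy'
      obtain ⟨x, hx, hxe⟩ := hy'
      subst hxe
      obtain ⟨hfd, hfop⟩ := hf o x hx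
      have htup : (fun i => g (Quot.mk _ ((fun i => f (x i)) i))) =
          fun i => Quot.mk (fun x y : A => δ x y ∈ J.carrier) (x i) :=
        funext fun i => hg0 (x i)
      have hmem' : (fun i => Quot.mk (fun x y : A => δ x y ∈ J.carrier) (x i)) ∈
          QA.Dom o := by
        rw [hQA.1]; exact ⟨x, hx, rfl⟩
      have hmem : (fun i => g (Quot.mk _ ((fun i => f (x i)) i))) ∈ QA.Dom o :=
        htup ▸ hmem'
      refine ⟨hmem, ?_⟩
      have hop2 : P2.op o (fun i => f (x i)) hy = f (P.op o x hx) := by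
        rw [← hfop]
      calc QA.op o _ hmem = QA.op o _ hmem' := PartAlg.op_congr QA o htup hmem hmem'
        _ = Quot.mk _ (P.op o x hx) := hQA.2 o x hx hmem'
        _ = g (Quot.mk _ (f (P.op o x hx))) := (hg0 _).symm
        _ = g (Quot.mk _ (P2.op o (fun i => f (x i)) hy)) := by rw [hop2]
        _ = g (Q2.op o (fun i => Quot.mk _ ((fun i => f (x i)) i)) hq) := by
              rw [hQ2.2 o (fun i => f (x i)) hy hq]
    exact satisfies_of_inj hgpart hginj hSat
end
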